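/- Let X be a simplicial complex on vertex set V, let B ⊆ V, and let < be a linear order on B. Let P be the family of partitions (B_1, B_2) of B such that B_2 ∈ X and, for every v ∈ B_2, the complex lk(X[V \ {u ∈ B_1 : u < v}], {u ∈ B_2 : u < v}) is not a cone over v. If C(lk(X[V \ B_1], B_2)) ≤ d − |B_2| for every (B_1, B_2) ∈ P, then C(X) ≤ d. -/

import Mathlib

namespace PaperKL

open Finset

variable {V : Type*}

section Complexes
variable [DecidableEq V]

/-- A (finite) abstract simplicial complex: a family of finite sets closed under
taking subsets. -/
def IsSimplicialComplex (X : Finset (Finset V)) : Prop :=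
  ∀ σ ∈ X, ∀ τ ⊆ σ, τ ∈ X

/-- `σ` is a free face of `X`, with `τ` the unique maximal face of `X` containing it:
equivalently, every face of `X` containing `σ` is contained in `τ`. -/
def IsFreeFace (X : Finset (Finset V)) (σ τ : Finset V) : Prop :=
  σ ∈ X ∧ τ ∈ X ∧ σ ⊆ τ ∧ ∀ η ∈ X, σ ⊆ η → η ⊆ τ

/-- `Y` is obtained from `X` by an elementary `d`-collapse. -/
def ElemCollapse (d : ℕ) (X Y : Finset (Finset V)) : Prop :=
  ∃ σ τ : Finset V, IsFreeFace X σ τ ∧ σ.card ≤ d ∧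
    Y = X.filter fun η => ¬(σ ⊆ η ∧ η ⊆ τ)

/-- `X` is `d`-collapsible: some sequence of elementary `d`-collapses reduces `X`
to the void complex `∅`. -/
def Collapsible (d : ℕ) (X : Finset (Finset V)) : Prop :=
  Relation.ReflTransGen (ElemCollapse d) X ∅

/-- The collapsibility number `C(X)`: the minimum `d` such that `X` is `d`-collapsible. -/
noncomputable def collapseNum (X : Finset (Finset V)) : ℕ :=
  sInf {d | Collapsible d X}

/-- The link `lk(X, τ) = {η ∈ X : η ∩ τ = ∅, η ∪ τ ∈ X}`. -/
def link (X : Finset (Finset V)) (τ : Finset V) : Finset (Finset V) :=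
  X.filter fun η => η ∩ τ = ∅ ∧ η ∪ τ ∈ X

/-- Deletion of a vertex: `X \ v`. -/
def deleteVert (X : Finset (Finset V)) (v : V) : Finset (Finset V) :=
  X.filter fun σ => v ∉ σ

/-- The induced subcomplex on the complement of `S`: `X[V \ S]`. -/
def deleteSet (X : Finset (Finset V)) (S : Finset V) : Finset (Finset V) :=
  X.filter fun σ => σ ∩ S = ∅

/-- The vertex set of a complex: the union of its faces. -/
def vertexSet (X : Finset (Finset V)) : Finset V := X.sup id

/-- The join `X ∗ Y = {σ ∪ τ : σ ∈ X, τ ∈ Y}`. -/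
def joinSC (X Y : Finset (Finset V)) : Finset (Finset V) :=
  (X ×ˢ Y).image fun p => p.1 ∪ p.2

/-- `τ` is a maximal face of `X`. -/
def IsMaximalFace (X : Finset (Finset V)) (τ : Finset V) : Prop :=
  τ ∈ X ∧ ∀ η ∈ X, τ ⊆ η → η = τ

/-- `X` is a cone over `v`: every maximal face of `X` contains `v`. -/
def IsConeOver (X : Finset (Finset V)) (v : V) : Prop :=
  ∀ τ, IsMaximalFace X τ → v ∈ τ

/-- A missing face of `X`: a subset of the vertex set which is not a face,
all of whose proper subsets are faces. -/
def IsMissingFace (X : Finset (Finset V)) (τ : Finset V) : Prop :=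
  τ ⊆ vertexSet X ∧ τ ∉ X ∧ ∀ σ ⊂ τ, σ ∈ X

end Complexes

/-- A finset is an independent set in the graph `G`. -/
def IsIndepSet (G : SimpleGraph V) (s : Finset V) : Prop :=
  ∀ u ∈ s, ∀ v ∈ s, ¬ G.Adj u v

section Graphs
variable [DecidableEq V]

/-- The complex `I_n(G[W])` of the induced subgraph `G[W]`, realized as the family of
subsets `U ⊆ W` such that `U` contains no independent set of `G` of size `n`. -/
noncomputable def indComplexOn (G : SimpleGraph V) (W : Finset V) (n : ℕ) :
    Finset (Finset V) :=
  @Finset.filter _ (fun U => ¬ ∃ I ⊆ U, I.card = n ∧ IsIndepSet G I)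
    (Classical.decPred _) W.powerset

variable [Fintype V]

/-- The complex `I_n(G)`: subsets of `V` containing no independent set of size `n`. -/
noncomputable def indComplex (G : SimpleGraph V) (n : ℕ) : Finset (Finset V) :=
  indComplexOn G Finset.univ n

/-- The open neighborhood of `v` as a finset. -/
noncomputable def nbrsFinset (G : SimpleGraph V) (v : V) : Finset V :=
  @Finset.filter _ (fun u => G.Adj v u) (Classical.decPred _) Finset.univ

/-- Filter of a finset by an arbitrary predicate (classical decidability). -/
noncomputable def cfilter (p : V → Prop) (s : Finset V) : Finset V :=
  @Finset.filter _ p (Classical.decPred _) s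

end Graphs

/-- `G` has maximum degree at most `Δ`. -/
def MaxDegLE (G : SimpleGraph V) (Δ : ℕ) : Prop :=
  ∀ v : V, (G.neighborSet v).ncard ≤ Δ

/-- `G` is claw-free: it has no induced subgraph isomorphic to `K_{1,3}`. -/
def ClawFree (G : SimpleGraph V) : Prop :=
  ¬ ∃ a b c d : V, b ≠ c ∧ b ≠ d ∧ c ≠ d ∧
    G.Adj a b ∧ G.Adj a c ∧ G.Adj a d ∧ ¬G.Adj b c ∧ ¬G.Adj b d ∧ ¬G.Adj c d

/-- `G` is chordal: it has no induced cycle of length at least 4. -/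
def IsChordal (G : SimpleGraph V) : Prop :=
  ∀ m : ℕ, 4 ≤ m → ¬ ∃ f : ZMod m → V, Function.Injective f ∧
    ∀ i j : ZMod m, G.Adj (f i) (f j) ↔ (j = i + 1 ∨ i = j + 1)

/-- `v` is a simplicial vertex of `G`: its closed neighborhood is a clique. -/
def IsSimplicialVertex (G : SimpleGraph V) (v : V) : Prop :=
  ∀ a b : V, G.Adj v a → G.Adj v b → a ≠ b → G.Adj a b

/-- The connected component of `v` in `G` is a path: its vertices can be enumerated
as `f 0, …, f m` with adjacency exactly between consecutive vertices. -/
def InPathComponent (G : SimpleGraph V) (v : V) : Prop :=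
  ∃ (m : ℕ) (f : Fin (m + 1) → V), Function.Injective f ∧
    (∀ w, G.Reachable v w ↔ ∃ i, f i = w) ∧
    (∀ i j : Fin (m + 1), G.Adj (f i) (f j) ↔ ((i : ℕ) + 1 = (j : ℕ) ∨ (j : ℕ) + 1 = (i : ℕ)))

/-- The collection `A 0, …, A (t-1)` of independent sets of `G` admits a rainbow
independent set of size `n`: there are indices `g 0 < ⋯ < g (n-1)` and distinct
vertices `a j ∈ A (g j)` forming an independent set of `G`. -/
def HasRainbowIndepSet [DecidableEq V] (G : SimpleGraph V) (n : ℕ) {t : ℕ} (A : Fin t → Finset V) : Prop :=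
  ∃ (g : Fin n → Fin t) (a : Fin n → V), StrictMono g ∧ Function.Injective a ∧
    (∀ j, a j ∈ A (g j)) ∧ IsIndepSet G (Finset.image a Finset.univ)

section FGraphs
variable [DecidableEq V] [Fintype V]

/-- `f_G(n)`: the minimum `t` such that every collection of `t` independent sets of
size `n` in `G` has a rainbow independent set of size `n`. -/
noncomputable def fRainbow (G : SimpleGraph V) (n : ℕ) : ℕ :=
  sInf {t | ∀ A : Fin t → Finset V,
    (∀ i, IsIndepSet G (A i) ∧ (A i).card = n) → HasRainbowIndepSet G n A}

/-- The independence number `α(G)`. -/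
noncomputable def indepNum (G : SimpleGraph V) : ℕ :=
  (@Finset.filter _ (fun s => IsIndepSet G s) (Classical.decPred _)
    (Finset.univ : Finset V).powerset).sup Finset.card

end FGraphs

/-!
Induct on `B`, removing its least element `v`. Partitions of `B \ {v}` for `X \ v` and for
`lk(X, v)` are partitions of `B` with `v ∈ B₁`, resp. `v ∈ B₂`, so by induction
`C(X \ v) ≤ d` and, unless `X` is a cone over `v`, `C(lk(X, v)) ≤ d - 1`.
Write `X = (X \ v) ∪ v ∗ lk(X, v)`: a collapse of `σ ⊆ τ` in the link lifts to the collapse of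
`σ ∪ {v} ⊆ τ ∪ {v}` in `X`, so `X` `d`-collapses onto `X \ v`. If `X` is a cone over `v` then
`lk(X, v) = X \ v`, and collapsing `σ ⊆ τ ∪ {v}` instead collapses the cone together with its base.
-/

section Collapsibility
variable [DecidableEq V] {X : Finset (Finset V)} {S T σ η : Finset V} {v : V} {d : ℕ}

@[simp] lemma mem_link : η ∈ link X T ↔ η ∈ X ∧ η ∩ T = ∅ ∧ η ∪ T ∈ X := mem_filter

@[simp] lemma mem_deleteSet : σ ∈ deleteSet X S ↔ σ ∈ X ∧ σ ∩ S = ∅ := mem_filter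

@[simp] lemma mem_deleteVert : σ ∈ deleteVert X v ↔ σ ∈ X ∧ v ∉ σ := mem_filter

lemma mem_link_singleton : η ∈ link X {v} ↔ η ∈ X ∧ v ∉ η ∧ insert v η ∈ X := by
  rw [mem_link, ← disjoint_iff_inter_eq_empty, disjoint_singleton_right, union_comm,
    ← insert_eq]

@[simp] lemma link_empty : link X ∅ = X := by ext; simp

@[simp] lemma deleteSet_empty : deleteSet X ∅ = X := by ext; simp

lemma deleteSet_insert : deleteSet X (insert v S) = deleteSet (deleteVert X v) S := by
  ext η
  simp only [mem_deleteSet, mem_deleteVert, ← disjoint_iff_inter_eq_empty,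
    disjoint_insert_right]
  tauto

lemma isSimplicialComplex_link (hX : IsSimplicialComplex X) (T : Finset V) :
    IsSimplicialComplex (link X T) := by
  intro σ hσ ρ hρ
  rw [mem_link] at hσ ⊢
  exact ⟨hX _ hσ.1 _ hρ, subset_empty.mp (hσ.2.1 ▸ inter_subset_inter_right hρ),
    hX _ hσ.2.2 _ (union_subset_union_left hρ)⟩

lemma isSimplicialComplex_deleteVert (hX : IsSimplicialComplex X) (v : V) :
    IsSimplicialComplex (deleteVert X v) := by
  intro σ hσ ρ hρ
  rw [mem_deleteVert] at hσ ⊢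
  exact ⟨hX _ hσ.1 _ hρ, fun hv => hσ.2 (hρ hv)⟩

lemma ElemCollapse.mono {e : ℕ} {Y : Finset (Finset V)} (hde : d ≤ e)
    (h : ElemCollapse d X Y) : ElemCollapse e X Y :=
  let ⟨σ, τ, hfree, hcard, hY⟩ := h
  ⟨σ, τ, hfree, hcard.trans hde, hY⟩

lemma ElemCollapse.subset {Y : Finset (Finset V)} (h : ElemCollapse d X Y) : Y ⊆ X := by
  obtain ⟨σ, τ, -, -, rfl⟩ := h
  exact filter_subset _ _

lemma Collapsible.mono {e : ℕ} (hde : d ≤ e) (h : Collapsible d X) : Collapsible e X :=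
  Relation.ReflTransGen.mono (fun _ _ => ElemCollapse.mono hde) _ _ h

/-- A face of maximum cardinality is a free face of itself. -/
lemma exists_collapsible (X : Finset (Finset V)) : ∃ d, Collapsible d X := by
  induction X using Finset.strongInduction with
  | H X ih =>
    rcases X.eq_empty_or_nonempty with rfl | hne
    · exact ⟨0, .refl⟩
    obtain ⟨τ, hτ, hmax⟩ := X.exists_max_image card hne
    have hfree : IsFreeFace X τ τ := ⟨hτ, hτ, subset_rfl,
      fun η hη hτη => (eq_of_subset_of_card_le hτη (hmax η hη)).ge⟩
    have hsmaller : (X.filter fun η => ¬(τ ⊆ η ∧ η ⊆ τ)) ⊂ X :=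
      filter_ssubset.mpr ⟨τ, hτ, by simp⟩
    obtain ⟨d, hd⟩ := ih _ hsmaller
    exact ⟨max τ.card d, .head ⟨τ, τ, hfree, le_max_left _ _, rfl⟩ (hd.mono (le_max_right _ _))⟩

lemma collapseNum_le_iff : collapseNum X ≤ d ↔ Collapsible d X :=
  ⟨fun hle => Collapsible.mono hle (Nat.sInf_mem (exists_collapsible X)), fun h => Nat.sInf_le h⟩

end Collapsibility

theorem _root_.Relation.ReflTransGen.lift_of_invariant {α β : Type*} {r : α → α → Prop}
    {p : β → β → Prop} {P : α → Prop} {a b : α} (f : α → β)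
    (hP : ∀ a b, P a → r a b → P b) (hf : ∀ a b, P a → r a b → p (f a) (f b))
    (h : Relation.ReflTransGen r a b) (ha : P a) : Relation.ReflTransGen p (f a) (f b) := by
  induction h using Relation.ReflTransGen.head_induction_on with
  | refl => exact .refl
  | head hac _ ih => exact .head (hf _ _ ha hac) (ih (hP _ _ ha hac))

section Apex
variable [DecidableEq V] {X L Z D : Finset (Finset V)} {S T : Finset V} {v : V} {d : ℕ}

lemma ElemCollapse.union_image_insert (hD : ∀ η ∈ D, v ∉ η) (hL : ∀ η ∈ L, v ∉ η)
    (h : ElemCollapse d L Z) :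
    ElemCollapse (d + 1) (D ∪ L.image (insert v)) (D ∪ Z.image (insert v)) := by
  obtain ⟨σ, τ, ⟨hσ, hτ, hστ, hfree⟩, hcard, rfl⟩ := h
  have hvσ := hL σ hσ
  refine ⟨insert v σ, insert v τ, ⟨mem_union_right _ (mem_image_of_mem _ hσ),
    mem_union_right _ (mem_image_of_mem _ hτ), insert_subset_insert v hστ, ?_⟩,
    (card_insert_le v σ).trans (by omega), ?_⟩
  · simp only [mem_union, mem_image]
    rintro η (hη | ⟨ρ, hρ, rfl⟩) hση
    · exact absurd (hση (mem_insert_self v σ)) (hD η hη)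
    · exact insert_subset_insert v (hfree ρ hρ ((insert_subset_insert_iff hvσ).mp hση))
  · have hD_kept : D.filter (fun η => ¬(insert v σ ⊆ η ∧ η ⊆ insert v τ)) = D :=
      filter_true_of_mem fun η hη hsub => hD η hη (hsub.1 (mem_insert_self v σ))
    rw [filter_union, filter_image, hD_kept]
    congr 2
    refine filter_congr fun ρ hρ => ?_
    rw [insert_subset_insert_iff hvσ, insert_subset_insert_iff (hL ρ hρ)]

lemma ElemCollapse.union_image_insert_self (hL : ∀ η ∈ L, v ∉ η) (h : ElemCollapse d L Z) :
    ElemCollapse d (L ∪ L.image (insert v)) (Z ∪ Z.image (insert v)) := by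
  obtain ⟨σ, τ, ⟨hσ, hτ, hστ, hfree⟩, hcard, rfl⟩ := h
  have hvσ := hL σ hσ
  refine ⟨σ, insert v τ, ⟨mem_union_left _ hσ, mem_union_right _ (mem_image_of_mem _ hτ),
    hστ.trans (subset_insert v τ), ?_⟩, hcard, ?_⟩
  · simp only [mem_union, mem_image]
    rintro η (hη | ⟨ρ, hρ, rfl⟩) hση
    · exact (hfree η hη hση).trans (subset_insert v τ)
    · exact insert_subset_insert v (hfree ρ hρ ((subset_insert_iff_of_notMem hvσ).mp hση))
  · rw [filter_union, filter_image]
    congr 1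
    · refine filter_congr fun ρ hρ => ?_
      rw [subset_insert_iff_of_notMem (hL ρ hρ)]
    · congr 1
      refine filter_congr fun ρ hρ => ?_
      rw [subset_insert_iff_of_notMem hvσ, insert_subset_insert_iff (hL ρ hρ)]

lemma Collapsible.reflTransGen_union_image_insert (hD : ∀ η ∈ D, v ∉ η)
    (hL : ∀ η ∈ L, v ∉ η) (h : Collapsible d L) :
    Relation.ReflTransGen (ElemCollapse (d + 1)) (D ∪ L.image (insert v)) D := by
  simpa using h.lift_of_invariant (fun L => D ∪ L.image (insert v))
    (fun _ _ hP hc η hη => hP η (hc.subset hη)) (fun _ _ hP hc => hc.union_image_insert hD hP) hL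

lemma Collapsible.union_image_insert_self (hL : ∀ η ∈ L, v ∉ η) (h : Collapsible d L) :
    Collapsible d (L ∪ L.image (insert v)) := by
  simpa [Collapsible] using h.lift_of_invariant (fun L => L ∪ L.image (insert v))
    (fun _ _ hP hc η hη => hP η (hc.subset hη)) (fun _ _ hP hc => hc.union_image_insert_self hP) hL

lemma IsSimplicialComplex.deleteVert_eq_self (hX : IsSimplicialComplex X) (hv : {v} ∉ X) :
    deleteVert X v = X :=
  filter_true_of_mem fun η hη hvη => hv (hX η hη _ (singleton_subset_iff.mpr hvη))

lemma IsSimplicialComplex.deleteVert_union_image_link (hX : IsSimplicialComplex X) (v : V) :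
    deleteVert X v ∪ (link X {v}).image (insert v) = X := by
  ext η
  simp only [mem_union, mem_deleteVert, mem_image, mem_link_singleton]
  constructor
  · rintro (⟨hη, -⟩ | ⟨ρ, ⟨-, -, hρ⟩, rfl⟩) <;> assumption
  · intro hη
    by_cases hv : v ∈ η
    · exact .inr ⟨η.erase v, ⟨hX η hη _ (erase_subset v η), notMem_erase v η,
        by rwa [insert_erase hv]⟩, insert_erase hv⟩
    · exact .inl ⟨hη, hv⟩

lemma IsSimplicialComplex.link_singleton_eq_deleteVert (hX : IsSimplicialComplex X)
    (hc : IsConeOver X v) : link X {v} = deleteVert X v := by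
  ext η
  simp only [mem_link_singleton, mem_deleteVert]
  refine ⟨fun ⟨hη, hv, _⟩ => ⟨hη, hv⟩, fun ⟨hη, hv⟩ => ⟨hη, hv, ?_⟩⟩
  obtain ⟨τ, hητ, hτ, hmax⟩ := X.exists_le_maximal hη
  have hτmax : IsMaximalFace X τ := ⟨hτ, fun ρ hρ hτρ => le_antisymm (hmax hρ hτρ) hτρ⟩
  exact hX τ hτ _ (insert_subset (hc τ hτmax) hητ)

lemma IsSimplicialComplex.collapsible_of_isConeOver (hX : IsSimplicialComplex X)
    (hc : IsConeOver X v) (h : Collapsible d (deleteVert X v)) : Collapsible d X := by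
  rw [← hX.deleteVert_union_image_link v, hX.link_singleton_eq_deleteVert hc]
  exact h.union_image_insert_self fun η hη => (mem_deleteVert.mp hη).2

lemma IsSimplicialComplex.collapsible_succ (hX : IsSimplicialComplex X)
    (hdel : Collapsible (d + 1) (deleteVert X v)) (hlk : Collapsible d (link X {v})) :
    Collapsible (d + 1) X := by
  rw [← hX.deleteVert_union_image_link v]
  exact (hlk.reflTransGen_union_image_insert (fun η hη => (mem_deleteVert.mp hη).2)
    fun η hη => (mem_link_singleton.mp hη).2.1).trans hdel

lemma IsSimplicialComplex.link_deleteSet_insert (hX : IsSimplicialComplex X) (hvS : v ∉ S)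
    (hvT : v ∉ T) :
    link (deleteSet X S) (insert v T) = link (deleteSet (link X {v}) S) T := by
  ext η
  rw [mem_link, mem_link, mem_deleteSet, mem_deleteSet, mem_deleteSet, mem_deleteSet,
    mem_link_singleton, mem_link_singleton]
  simp only [← disjoint_iff_inter_eq_empty, union_insert, disjoint_insert_left,
    disjoint_insert_right, mem_union, hvS, hvT, or_false, not_false_eq_true, true_and]
  constructor
  · rintro ⟨⟨hη, hηS⟩, ⟨hvη, hηT⟩, hvηT, hηTS⟩
    exact ⟨⟨⟨hη, hvη, hX _ hvηT _ (insert_subset_insert v subset_union_left)⟩, hηS⟩, hηT,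
      ⟨hX _ hvηT _ (subset_insert v _), hvη, hvηT⟩, hηTS⟩
  · tauto

end Apex

section Partitions
variable [LinearOrder V] {X : Finset (Finset V)} {B : Finset V} {v : V} {d : ℕ}

def PartitionBound (X : Finset (Finset V)) (B : Finset V) (d : ℕ) : Prop :=
  ∀ B₁ B₂ : Finset V, Disjoint B₁ B₂ → B₁ ∪ B₂ = B → B₂ ∈ X →
    (∀ v ∈ B₂, ¬ IsConeOver
      (link (deleteSet X (B₁.filter (fun u => u < v))) (B₂.filter (fun u => u < v))) v) →
    (collapseNum (link (deleteSet X B₁) B₂) : ℤ) ≤ (d : ℤ) - (B₂.card : ℤ)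

lemma PartitionBound.collapsible_of_empty (hX : IsSimplicialComplex X)
    (h : PartitionBound X ∅ d) : Collapsible d X := by
  rcases X.eq_empty_or_nonempty with rfl | ⟨σ, hσ⟩
  · exact .refl
  have hbound := h ∅ ∅ (disjoint_empty_left _) (union_empty _) (hX σ hσ ∅ (empty_subset _))
    (by simp)
  rw [deleteSet_empty, link_empty, card_empty, Nat.cast_zero, sub_zero, Nat.cast_le] at hbound
  exact collapseNum_le_iff.mp hbound

lemma PartitionBound.deleteVert (hB : ∀ u ∈ B, v < u) (h : PartitionBound X (insert v B) d) :
    PartitionBound (deleteVert X v) B d := by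
  intro B₁ B₂ hdisj hunion hB₂ hcone
  have hlt : ∀ w ∈ B₂, v < w := fun w hw => hB w (hunion ▸ mem_union_right _ hw)
  have hvB₂ : v ∉ B₂ := fun hv => lt_irrefl v (hlt v hv)
  have hbound := h (insert v B₁) B₂ (disjoint_insert_left.mpr ⟨hvB₂, hdisj⟩)
    (by rw [insert_union, hunion]) (mem_deleteVert.mp hB₂).1 fun w hw => by
      rw [filter_insert, if_pos (hlt w hw), deleteSet_insert]
      exact hcone w hw
  rwa [deleteSet_insert] at hbound

lemma PartitionBound.one_le (hB : ∀ u ∈ B, v < u) (hv : {v} ∈ X) (hcone : ¬IsConeOver X v)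
    (h : PartitionBound X (insert v B) d) : 1 ≤ d := by
  have hvB : v ∉ B := fun hv => lt_irrefl v (hB v hv)
  have hbound := h B {v} (disjoint_singleton_right.mpr hvB) (by rw [union_comm, ← insert_eq]) hv
    fun w hw => by
      rw [mem_singleton] at hw
      subst hw
      rwa [filter_singleton, if_neg (lt_irrefl _),
        filter_false_of_mem fun u hu => (hB u hu).asymm, deleteSet_empty, link_empty]
  rw [card_singleton, Nat.cast_one] at hbound
  omega

lemma PartitionBound.link (hX : IsSimplicialComplex X) (hB : ∀ u ∈ B, v < u)
    (hcone : ¬IsConeOver X v) (h : PartitionBound X (insert v B) d) :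
    PartitionBound (link X {v}) B (d - 1) := by
  intro B₁ B₂ hdisj hunion hB₂ hcone'
  have hlt₁ : ∀ w ∈ B₁, v < w := fun w hw => hB w (hunion ▸ mem_union_left _ hw)
  have hlt₂ : ∀ w ∈ B₂, v < w := fun w hw => hB w (hunion ▸ mem_union_right _ hw)
  have hvB₁ : v ∉ B₁ := fun hv => lt_irrefl v (hlt₁ v hv)
  have hvB₂ : v ∉ B₂ := fun hv => lt_irrefl v (hlt₂ v hv)
  have hbound := h B₁ (insert v B₂) (disjoint_insert_right.mpr ⟨hvB₁, hdisj⟩)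
    (by rw [union_insert, hunion]) (mem_link_singleton.mp hB₂).2.2 fun w hw => by
      rcases mem_insert.mp hw with rfl | hw
      · rwa [filter_insert, if_neg (lt_irrefl _),
          filter_false_of_mem fun u hu => (hlt₁ u hu).asymm,
          filter_false_of_mem fun u hu => (hlt₂ u hu).asymm, deleteSet_empty, link_empty]
      · rw [filter_insert, if_pos (hlt₂ w hw), hX.link_deleteSet_insert
          (fun hv => hvB₁ (mem_filter.mp hv).1) (fun hv => hvB₂ (mem_filter.mp hv).1)]
        exact hcone' w hw
  rw [hX.link_deleteSet_insert hvB₁ hvB₂, card_insert_of_notMem hvB₂] at hbound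
  push_cast at hbound
  -- for `d = 0` the truncated `d - 1` is harmless: `hbound` is then contradictory
  omega

theorem collapsible_of_partitionBound (hX : IsSimplicialComplex X) (h : PartitionBound X B d) :
    Collapsible d X := by
  induction B using Finset.induction_on_min generalizing X d with
  | empty => exact h.collapsible_of_empty hX
  | insert v B hB ih =>
    have hdel : Collapsible d (deleteVert X v) :=
      ih (isSimplicialComplex_deleteVert hX v) (h.deleteVert hB)
    by_cases hcone : IsConeOver X v
    · exact hX.collapsible_of_isConeOver hcone hdel
    by_cases hv : {v} ∈ X
    · have hlk := ih (isSimplicialComplex_link hX {v}) (h.link hX hB hcone)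
      rw [← Nat.sub_add_cancel (h.one_le hB hv hcone)] at hdel ⊢
      exact hX.collapsible_succ hdel hlk
    · rwa [hX.deleteVert_eq_self hv] at hdel

end Partitions

theorem collapseNum_le_of_partitions_general {V : Type*} [LinearOrder V]
    (X : Finset (Finset V)) (hX : IsSimplicialComplex X)
    (B : Finset V) (d : ℕ)
    (h : ∀ B₁ B₂ : Finset V, Disjoint B₁ B₂ → B₁ ∪ B₂ = B → B₂ ∈ X →
      (∀ v ∈ B₂, ¬ IsConeOver
        (link (deleteSet X (B₁.filter (fun u => u < v)))
          (B₂.filter (fun u => u < v))) v) →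
      (collapseNum (link (deleteSet X B₁) B₂) : ℤ) ≤ (d : ℤ) - (B₂.card : ℤ)) :
    collapseNum X ≤ d :=
  collapseNum_le_iff.mpr (collapsible_of_partitionBound hX h)

/-- Let `B ⊆ V` with a linear order on it. If for every partition
`(B₁, B₂)` of `B` with `B₂ ∈ X` such that, for each `v ∈ B₂`, the complex
`lk(X[V \ {u ∈ B₁ : u < v}], {u ∈ B₂ : u < v})` is not a cone over `v`, one has
`C(lk(X[V \ B₁], B₂)) ≤ d - |B₂|`, then `C(X) ≤ d`. -/
theorem collapseNum_le_of_partitions {V : Type*} [LinearOrder V]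
    (X : Finset (Finset V)) (hX : IsSimplicialComplex X)
    (B : Finset V) (hB : B ⊆ vertexSet X) (d : ℕ)
    (h : ∀ B₁ B₂ : Finset V, Disjoint B₁ B₂ → B₁ ∪ B₂ = B → B₂ ∈ X →
      (∀ v ∈ B₂, ¬ IsConeOver
        (link (deleteSet X (B₁.filter (fun u => u < v)))
          (B₂.filter (fun u => u < v))) v) →
      (collapseNum (link (deleteSet X B₁) B₂) : ℤ) ≤ (d : ℤ) - (B₂.card : ℤ)) :
    collapseNum X ≤ d :=
  collapseNum_le_of_partitions_general X hX B d h

end PaperKL
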